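/- arXiv:1710.03223 — 2 statements merged into one kernel-verified Lean document; each statement's English description precedes it below -/
import Mathlib

section
/- Let v1, v2, v3 be vectors in ℕ^n with MIN defined as: MIN(v_i, v_j) = +∞ if v_i = v_j, and otherwise the minimum over coordinates k where v_i[k] ≠ v_j[k] of min(v_i[k], v_j[k]). Then it is impossible that MIN(v_1, v_2) < MIN(v_1, v_3) ≤ MIN(v_2, v_3) (strictly less in the first inequality). -/
/-- `MIN v w` : `⊤` if `v = w`, otherwise the minimum over coordinates `k` with
`v k ≠ w k` of `min (v k) (w k)`, as an element of `ℕ∞`. -/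
noncomputable def MIN {n : ℕ} (v w : Fin n → ℕ) : ℕ∞ :=
  sInf {x : ℕ∞ | ∃ k : Fin n, v k ≠ w k ∧ x = ((min (v k) (w k) : ℕ) : ℕ∞)}

/-! `MIN` satisfies the ultrametric inequality `min (MIN u v) (MIN v w) ≤ MIN u w`: on a coordinate
where `u` and `w` differ, each of `u k`, `w k` is bounded below by `MIN` of a pair through `v` that
still differs there. With `MIN v₁ v₃ ≤ MIN v₂ v₃` this forces `MIN v₁ v₃ ≤ MIN v₁ v₂`. -/

section MIN

variable {n : ℕ}

theorem MIN_comm (v w : Fin n → ℕ) : MIN v w = MIN w v := by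
  simp only [MIN, ne_comm, min_comm]

theorem MIN_le {v w : Fin n → ℕ} {k : Fin n} (h : v k ≠ w k) :
    MIN v w ≤ ((min (v k) (w k) : ℕ) : ℕ∞) :=
  sInf_le ⟨k, h, rfl⟩

theorem MIN_le_left {v w : Fin n → ℕ} {k : Fin n} (h : v k ≠ w k) : MIN v w ≤ v k :=
  (MIN_le h).trans (Nat.cast_le.mpr (min_le_left _ _))

theorem min_MIN_le_left {u v w : Fin n → ℕ} {k : Fin n} (h : u k ≠ w k) :
    min (MIN u v) (MIN v w) ≤ u k := by
  by_cases huv : u k = v k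
  · exact min_le_of_right_le (huv ▸ MIN_le_left (huv ▸ h))
  · exact min_le_of_left_le (MIN_le_left huv)

theorem min_MIN_le_MIN (u v w : Fin n → ℕ) : min (MIN u v) (MIN v w) ≤ MIN u w := by
  refine le_sInf ?_
  rintro _ ⟨k, hk, rfl⟩
  have hle_w : min (MIN u v) (MIN v w) ≤ w k := by
    rw [min_comm, MIN_comm u, MIN_comm v]
    exact min_MIN_le_left hk.symm
  rw [Nat.mono_cast.map_min]
  exact le_min (min_MIN_le_left hk) hle_w

end MIN

theorem stmt_1 {n : ℕ} (v₁ v₂ v₃ : Fin n → ℕ) :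
    ¬ (MIN v₁ v₂ < MIN v₁ v₃ ∧ MIN v₁ v₃ ≤ MIN v₂ v₃) := by
  rintro ⟨h12, h13⟩
  have : MIN v₁ v₃ ≤ MIN v₁ v₂ := by
    simpa only [MIN_comm v₃, min_eq_left h13] using min_MIN_le_MIN v₁ v₃ v₂
  exact (h12.trans_le this).false
end

section
/- Let n ≥ 1 and N = ⌈log₂(n+1)⌉. Suppose nonnegative integers ℓ_1, ..., ℓ_r satisfy ℓ_p ≥ 2^(m-1) for all p, where m ≤ N, and r = (∑_{k=m}^N binom(N,k)) + 1, and n ≥ (r − 1) + ∑_p ℓ_p. Then n + 1 > 2^N, a contradiction; hence at most ∑_{k=m}^N binom(N,k) of the subvectors in any decomposition of a vector of length n can each have length ≥ 2^(m-1). -/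
/-!
Write `N = ⌈log₂(n+1)⌉`, so `n + 1 ≤ 2 ^ N`, and `S = ∑_{k=m}^N C(N,k)`. Shifting both arguments of a
binomial coefficient up by `m - 1` does not decrease it, so `S ≥ ∑_{j=1}^{N-m+1} C(N-m+1, j) = 2^(N-m+1) - 1`,
i.e. `2 ^ N ≤ 2 ^ (m-1) * (S + 1)`. Hence `2 ^ N < (S + 1) * (1 + 2 ^ (m-1)) ≤ r * (1 + 2 ^ (m-1)) ≤ n + 1`.
-/

open Finset

theorem Nat.choose_le_choose_add_add (n k d : ℕ) : n.choose k ≤ (n + d).choose (k + d) := by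
  induction d with
  | zero => rfl
  | succ d ih =>
    rw [← add_assoc, ← add_assoc, Nat.choose_succ_succ]
    exact ih.trans (Nat.le_add_right _ _)

theorem Nat.two_pow_le_sum_Icc_choose_add_one (M d : ℕ) :
    2 ^ M ≤ ∑ k ∈ Icc (d + 1) (M + d), (M + d).choose k + 1 := by
  have hshift : ∑ j ∈ range M, M.choose (j + 1) ≤ ∑ k ∈ Icc (d + 1) (M + d), (M + d).choose k := by
    rw [← Finset.Ico_add_one_right_eq_Icc, Finset.sum_Ico_eq_sum_range, show M + d + 1 - (d + 1) = M by omega]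
    refine Finset.sum_le_sum fun j _ => ?_
    rw [show d + 1 + j = j + 1 + d by omega]
    exact Nat.choose_le_choose_add_add M (j + 1) d
  calc 2 ^ M = ∑ j ∈ range M, M.choose (j + 1) + 1 := by
        rw [← Nat.sum_range_choose, Finset.sum_range_succ', Nat.choose_zero_right]
    _ ≤ _ := Nat.add_le_add_right hshift 1

theorem Nat.two_pow_le_two_pow_mul_sum_Icc_choose_add_one {N m : ℕ} (hm : 1 ≤ m) (hmN : m ≤ N + 1) :
    2 ^ N ≤ 2 ^ (m - 1) * (∑ k ∈ Icc m N, N.choose k + 1) := by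
  obtain ⟨d, rfl⟩ : ∃ d, m = d + 1 := ⟨m - 1, by omega⟩
  obtain ⟨M, rfl⟩ : ∃ M, N = M + d := ⟨N - d, by omega⟩
  rw [Nat.add_sub_cancel, pow_add, mul_comm (2 ^ M)]
  exact Nat.mul_le_mul_left _ (Nat.two_pow_le_sum_Icc_choose_add_one M d)

theorem stmt_12_general (n m r : ℕ)
    (hm1 : 1 ≤ m) (hm2 : m ≤ Nat.clog 2 (n + 1))
    (hr : r ≥ (∑ k ∈ Finset.Icc m (Nat.clog 2 (n + 1)), (Nat.clog 2 (n + 1)).choose k) + 1)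
    (hle : r * (1 + 2 ^ (m - 1)) ≤ n + 1) :
    False := by
  set N := Nat.clog 2 (n + 1)
  set S := ∑ k ∈ Icc m N, N.choose k
  have hN : n + 1 ≤ 2 ^ N := Nat.le_pow_clog one_lt_two _
  have hS : 2 ^ N ≤ 2 ^ (m - 1) * (S + 1) :=
    Nat.two_pow_le_two_pow_mul_sum_Icc_choose_add_one hm1 (by omega)
  refine lt_irrefl (2 ^ N) ?_
  calc 2 ^ N < (S + 1) + 2 ^ (m - 1) * (S + 1) := by omega
    _ = (S + 1) * (1 + 2 ^ (m - 1)) := by ring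
    _ ≤ r * (1 + 2 ^ (m - 1)) := Nat.mul_le_mul_right _ hr
    _ ≤ n + 1 := hle
    _ ≤ 2 ^ N := hN

theorem stmt_12 (n m r : ℕ) (hn : 1 ≤ n)
    (hm1 : 1 ≤ m) (hm2 : m ≤ Nat.clog 2 (n + 1))
    (hr : r ≥ (∑ k ∈ Finset.Icc m (Nat.clog 2 (n + 1)), (Nat.clog 2 (n + 1)).choose k) + 1)
    (hle : r * (1 + 2 ^ (m - 1)) ≤ n + 1) :
    False :=
  stmt_12_general n m r hm1 hm2 hr hle
end
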